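/- arXiv:1006.3190 — 6 statements merged into one kernel-verified Lean document; each statement's English description precedes it below -/
import Mathlib

section
/- Let 𝔞_J be a positive definite sesquilinear form on a subspace D of a Hilbert space with J(D) = D, satisfying 𝔞_J[Jx, Jy] = 𝔞_J[x,y], and let 𝔳 be a symmetric off-diagonal form on D (𝔳[Jx,y] = -𝔳[x,Jy]) with relative bound v₀ = sup_{x ≠ 0} |𝔳[x,x]|/𝔞_J[x,x] < ∞. Then for every x ∈ D with decomposition x = x₊ + x₋, x± ∈ Ran(I±J) ∩ D, one has |𝔳[x,x]| ≤ 2 v₀ √(𝔞_J[x₊,x₊] · 𝔞_J[x₋,x₋]). -/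
/-!
The parts `x₊ = (x + Jx)/2` and `x₋ = (x - Jx)/2` are eigenvectors of `J` for the eigenvalues
`±1`. Hence `𝔳` vanishes on the diagonal pairs `(x₊, x₊)`, `(x₋, x₋)`, while `𝔞_J` vanishes on
the mixed pairs; in particular `𝔳[x] = 0` if `x₊ = 0` or `x₋ = 0`. Otherwise, for real `s, t`,
`𝔳[s x₊ + t x₋] = s t 𝔳[x]` and `𝔞_J[s x₊ + t x₋] = s² a + t² b` with `a = 𝔞_J[x₊]`,
`b = 𝔞_J[x₋]`, so the relative bound yields `|s t| |𝔳[x]| ≤ v₀ (s² a + t² b)`, and the choice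
`s = √b`, `t = √a` is the AM-GM optimum.
-/

open scoped ComplexConjugate

section SesquilinearForm

variable {𝕜 E : Type*} [RCLike 𝕜] [AddCommGroup E] [Module 𝕜 E]

def sesqFormOfSubmodule (D : Submodule 𝕜 E) (f : E → E → 𝕜)
    (hadd₁ : ∀ x y z, x ∈ D → y ∈ D → z ∈ D → f (x + y) z = f x z + f y z)
    (hadd₂ : ∀ x y z, x ∈ D → y ∈ D → z ∈ D → f x (y + z) = f x y + f x z)
    (hsmul₁ : ∀ (c : 𝕜) (x y : E), x ∈ D → y ∈ D → f (c • x) y = conj c * f x y)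
    (hsmul₂ : ∀ (c : 𝕜) (x y : E), x ∈ D → y ∈ D → f x (c • y) = c * f x y) :
    D →ₗ⋆[𝕜] D →ₗ[𝕜] 𝕜 :=
  LinearMap.mk₂'ₛₗ _ _ (fun x y : D => f x y) (fun x y z => hadd₁ x y z x.2 y.2 z.2)
    (fun c x y => hsmul₁ c x y x.2 y.2) (fun x y z => hadd₂ x y z x.2 y.2 z.2)
    (fun c x y => hsmul₂ c x y x.2 y.2)

variable (A B : E →ₗ⋆[𝕜] E →ₗ[𝕜] 𝕜) {p m : E}

lemma apply_ofReal_smul_add_ofReal_smul_of_apply_self_eq_zero (hp : B p p = 0)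
    (hm : B m m = 0) (s t : ℝ) :
    B ((s : 𝕜) • p + (t : 𝕜) • m) ((s : 𝕜) • p + (t : 𝕜) • m) =
      ((s * t : ℝ) : 𝕜) * B (p + m) (p + m) := by
  simp only [map_add, map_smulₛₗ, LinearMap.add_apply, LinearMap.smul_apply, RCLike.conj_ofReal,
    RingHom.id_apply, smul_eq_mul, hp, hm]
  push_cast
  ring

lemma apply_ofReal_smul_add_ofReal_smul_of_cross_eq_zero (hpm : A p m = 0) (hmp : A m p = 0)
    (s t : ℝ) :
    A ((s : 𝕜) • p + (t : 𝕜) • m) ((s : 𝕜) • p + (t : 𝕜) • m) =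
      ((s ^ 2 : ℝ) : 𝕜) * A p p + ((t ^ 2 : ℝ) : 𝕜) * A m m := by
  simp only [map_add, map_smulₛₗ, LinearMap.add_apply, LinearMap.smul_apply, RCLike.conj_ofReal,
    RingHom.id_apply, smul_eq_mul, hpm, hmp]
  push_cast
  ring

variable {A B} {v₀ : ℝ}

theorem norm_apply_add_le_of_apply_self_eq_zero_of_cross_eq_zero
    (hApos : ∀ x, x ≠ 0 → 0 < RCLike.re (A x x))
    (hbound : ∀ y, ‖B y y‖ ≤ v₀ * RCLike.re (A y y))
    (hBp : B p p = 0) (hBm : B m m = 0) (hApm : A p m = 0) (hAmp : A m p = 0) :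
    ‖B (p + m) (p + m)‖ ≤ 2 * v₀ * √(RCLike.re (A p p) * RCLike.re (A m m)) := by
  rcases eq_or_ne p 0 with rfl | hp0
  · simp [hBm]
  rcases eq_or_ne m 0 with rfl | hm0
  · simp [hBp]
  set a := RCLike.re (A p p)
  set b := RCLike.re (A m m)
  have ha : 0 < a := hApos p hp0
  have hb : 0 < b := hApos m hm0
  have htest := hbound ((√b : 𝕜) • p + (√a : 𝕜) • m)
  rw [apply_ofReal_smul_add_ofReal_smul_of_apply_self_eq_zero B hBp hBm,
    apply_ofReal_smul_add_ofReal_smul_of_cross_eq_zero A hApm hAmp, norm_mul, RCLike.norm_ofReal,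
    map_add RCLike.re, RCLike.re_ofReal_mul, RCLike.re_ofReal_mul, Real.sq_sqrt ha.le,
    Real.sq_sqrt hb.le] at htest
  have hr : 0 < √a * √b := by positivity
  have hab : a * b = (√a * √b) ^ 2 := by rw [mul_pow, Real.sq_sqrt ha.le, Real.sq_sqrt hb.le]
  rw [Real.sqrt_mul ha.le]
  refine le_of_mul_le_mul_left ?_ hr
  calc √a * √b * ‖B (p + m) (p + m)‖ = |√b * √a| * ‖B (p + m) (p + m)‖ := by
        rw [abs_of_pos (by positivity), mul_comm √b]
    _ ≤ v₀ * (b * a + a * b) := htest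
    _ = √a * √b * (2 * v₀ * (√a * √b)) := by linear_combination 2 * v₀ * hab

theorem norm_apply_self_le_of_involutive {J : E →ₗ[𝕜] E} (hJ : Function.Involutive J)
    (hA : ∀ x y, A (J x) (J y) = A x y) (hB : ∀ x y, B (J x) y = -B x (J y))
    (hApos : ∀ x, x ≠ 0 → 0 < RCLike.re (A x x))
    (hbound : ∀ y, ‖B y y‖ ≤ v₀ * RCLike.re (A y y)) (x : E) :
    ‖B x x‖ ≤ 2 * v₀ * √(RCLike.re (A ((2⁻¹ : 𝕜) • (x + J x)) ((2⁻¹ : 𝕜) • (x + J x))) *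
      RCLike.re (A ((2⁻¹ : 𝕜) • (x - J x)) ((2⁻¹ : 𝕜) • (x - J x)))) := by
  set p := (2⁻¹ : 𝕜) • (x + J x)
  set m := (2⁻¹ : 𝕜) • (x - J x)
  have hJp : J p = p := by simp only [p, map_smul, map_add, hJ x, add_comm]
  have hJm : J m = -m := by simp only [m, map_smul, map_sub, hJ x, ← smul_neg, neg_sub]
  have hBp : B p p = 0 := self_eq_neg.mp (by simpa only [hJp] using hB p p)
  have hBm : B m m = 0 := neg_eq_self.mp
    (by simpa only [hJm, map_neg, LinearMap.neg_apply, neg_neg] using hB m m)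
  have hApm : A p m = 0 := neg_eq_self.mp (by simpa only [hJp, hJm, map_neg] using hA p m)
  have hAmp : A m p = 0 := neg_eq_self.mp
    (by simpa only [hJp, hJm, map_neg, LinearMap.neg_apply] using hA m p)
  have hx : x = p + m := by simp only [p, m]; module
  rw [hx]
  exact norm_apply_add_le_of_apply_self_eq_zero_of_cross_eq_zero hApos hbound hBp hBm hApm hAmp

end SesquilinearForm

theorem offdiag_form_estimate_general
    {H : Type*} [NormedAddCommGroup H] [InnerProductSpace ℂ H]
    (J : H →L[ℂ] H) (hJ2 : ∀ x : H, J (J x) = x)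
    (D : Submodule ℂ H) (hJD : ∀ x ∈ D, J x ∈ D)
    (aJ v : H → H → ℂ)
    -- aJ is a sesquilinear, symmetric, positive definite form on D, commuting with J
    (haJadd₁ : ∀ x y z, x ∈ D → y ∈ D → z ∈ D → aJ (x + y) z = aJ x z + aJ y z)
    (haJadd₂ : ∀ x y z, x ∈ D → y ∈ D → z ∈ D → aJ x (y + z) = aJ x y + aJ x z)
    (haJsmul₁ : ∀ (c : ℂ) (x y : H), x ∈ D → y ∈ D → aJ (c • x) y = conj c * aJ x y)
    (haJsmul₂ : ∀ (c : ℂ) (x y : H), x ∈ D → y ∈ D → aJ x (c • y) = c * aJ x y)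
    (haJpos : ∀ x, x ∈ D → x ≠ 0 → 0 < (aJ x x).re)
    (haJJ : ∀ x y, x ∈ D → y ∈ D → aJ (J x) (J y) = aJ x y)
    -- v is a sesquilinear, symmetric, off-diagonal form on D
    (hadd₁ : ∀ x y z, x ∈ D → y ∈ D → z ∈ D → v (x + y) z = v x z + v y z)
    (hadd₂ : ∀ x y z, x ∈ D → y ∈ D → z ∈ D → v x (y + z) = v x y + v x z)
    (hsmul₁ : ∀ (c : ℂ) (x y : H), x ∈ D → y ∈ D → v (c • x) y = conj c * v x y)
    (hsmul₂ : ∀ (c : ℂ) (x y : H), x ∈ D → y ∈ D → v x (c • y) = c * v x y)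
    (hoff : ∀ x y, x ∈ D → y ∈ D → v (J x) y = -v x (J y))
    -- the relative bound
    (v₀ : ℝ) (hv₀ : ∀ x, x ∈ D → ‖v x x‖ ≤ v₀ * (aJ x x).re)
    (x : H) (hx : x ∈ D) :
    ‖v x x‖ ≤
      2 * v₀ * Real.sqrt ((aJ ((2⁻¹ : ℂ) • (x + J x)) ((2⁻¹ : ℂ) • (x + J x))).re *
        (aJ ((2⁻¹ : ℂ) • (x - J x)) ((2⁻¹ : ℂ) • (x - J x))).re) := by
  let A := sesqFormOfSubmodule D aJ haJadd₁ haJadd₂ haJsmul₁ haJsmul₂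
  let B := sesqFormOfSubmodule D v hadd₁ hadd₂ hsmul₁ hsmul₂
  exact norm_apply_self_le_of_involutive (A := A) (B := B) (J := (J : H →ₗ[ℂ] H).restrict hJD)
    (fun y => Subtype.ext (hJ2 y)) (fun y z => haJJ y z y.2 z.2) (fun y z => hoff y z y.2 z.2)
    (fun y hy => haJpos y y.2 ((Submodule.coe_eq_zero.not).mpr hy)) (fun y => hv₀ y y.2) ⟨x, hx⟩

/-- If `aJ` is a positive definite symmetric sesquilinear form on a `J`-invariant subspace `D`
with `aJ[Jx, Jy] = aJ[x, y]`, and `v` is a symmetric off-diagonal form with relative bound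
`v₀` (i.e. `|v[x]| ≤ v₀ · aJ[x]` on `D`), then for `x ∈ D` with decomposition
`x = x₊ + x₋`, `x± = (x ± Jx)/2`, one has `|v[x]| ≤ 2 v₀ √(aJ[x₊] · aJ[x₋])`. -/
theorem offdiag_form_estimate
    {H : Type*} [NormedAddCommGroup H] [InnerProductSpace ℂ H] [CompleteSpace H]
    (J : H →L[ℂ] H) (hJsa : IsSelfAdjoint J) (hJ2 : ∀ x : H, J (J x) = x)
    (D : Submodule ℂ H) (hJD : ∀ x ∈ D, J x ∈ D)
    (aJ v : H → H → ℂ)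
    -- aJ is a sesquilinear, symmetric, positive definite form on D, commuting with J
    (haJadd₁ : ∀ x y z, x ∈ D → y ∈ D → z ∈ D → aJ (x + y) z = aJ x z + aJ y z)
    (haJadd₂ : ∀ x y z, x ∈ D → y ∈ D → z ∈ D → aJ x (y + z) = aJ x y + aJ x z)
    (haJsmul₁ : ∀ (c : ℂ) (x y : H), x ∈ D → y ∈ D → aJ (c • x) y = conj c * aJ x y)
    (haJsmul₂ : ∀ (c : ℂ) (x y : H), x ∈ D → y ∈ D → aJ x (c • y) = c * aJ x y)
    (haJsym : ∀ x y, x ∈ D → y ∈ D → aJ x y = conj (aJ y x))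
    (haJpos : ∀ x, x ∈ D → x ≠ 0 → 0 < (aJ x x).re)
    (haJJ : ∀ x y, x ∈ D → y ∈ D → aJ (J x) (J y) = aJ x y)
    -- v is a sesquilinear, symmetric, off-diagonal form on D
    (hadd₁ : ∀ x y z, x ∈ D → y ∈ D → z ∈ D → v (x + y) z = v x z + v y z)
    (hadd₂ : ∀ x y z, x ∈ D → y ∈ D → z ∈ D → v x (y + z) = v x y + v x z)
    (hsmul₁ : ∀ (c : ℂ) (x y : H), x ∈ D → y ∈ D → v (c • x) y = conj c * v x y)
    (hsmul₂ : ∀ (c : ℂ) (x y : H), x ∈ D → y ∈ D → v x (c • y) = c * v x y)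
    (hsym : ∀ x y, x ∈ D → y ∈ D → v x y = conj (v y x))
    (hoff : ∀ x y, x ∈ D → y ∈ D → v (J x) y = -v x (J y))
    -- the relative bound
    (v₀ : ℝ) (hv₀ : ∀ x, x ∈ D → ‖v x x‖ ≤ v₀ * (aJ x x).re)
    (x : H) (hx : x ∈ D) :
    ‖v x x‖ ≤
      2 * v₀ * Real.sqrt ((aJ ((2⁻¹ : ℂ) • (x + J x)) ((2⁻¹ : ℂ) • (x + J x))).re *
        (aJ ((2⁻¹ : ℂ) • (x - J x)) ((2⁻¹ : ℂ) • (x - J x))).re) :=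
  offdiag_form_estimate_general J hJ2 D hJD aJ v haJadd₁ haJadd₂ haJsmul₁ haJsmul₂ haJpos haJJ hadd₁
    hadd₂ hsmul₁ hsmul₂ hoff v₀ hv₀ x hx
end

section
/- Let 𝔳 be a symmetric sesquilinear form on a J-invariant subspace D that is off-diagonal with respect to a self-adjoint involution J (𝔳[Jx,y] = -𝔳[x,Jy]), and define the dual form 𝔳'[x,y] := i·𝔳[x, Jy]. Then 𝔳' is a symmetric sesquilinear form, 𝔳' is also off-diagonal with respect to J, and for every x ∈ D with decomposition x = x₊ + x₋ (x± ∈ Ran(I±J)∩D), one has 𝔳[x,x] = 2 Re 𝔳[x₊,x₋] and 𝔳'[x,x] = 2 Im 𝔳[x₊,x₋]. -/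
open scoped ComplexConjugate

/-- For a symmetric sesquilinear form `v` on a `J`-invariant subspace `D`, off-diagonal with
respect to the self-adjoint involution `J`, the dual form `v'[x,y] := i·v[x, Jy]` is symmetric
and off-diagonal, and for `x ∈ D` with `x = x₊ + x₋`, `x± = (x ± Jx)/2`, one has
`v[x,x] = 2 Re v[x₊, x₋]` and `v'[x,x] = 2 Im v[x₊, x₋]`. -/
theorem dual_offdiag_form
    {H : Type*} [NormedAddCommGroup H] [InnerProductSpace ℂ H] [CompleteSpace H]
    (J : H →L[ℂ] H) (hJsa : IsSelfAdjoint J) (hJ2 : ∀ x : H, J (J x) = x)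
    (D : Submodule ℂ H) (hJD : ∀ x ∈ D, J x ∈ D)
    (v : H → H → ℂ)
    (hadd₁ : ∀ x y z, x ∈ D → y ∈ D → z ∈ D → v (x + y) z = v x z + v y z)
    (hadd₂ : ∀ x y z, x ∈ D → y ∈ D → z ∈ D → v x (y + z) = v x y + v x z)
    (hsmul₁ : ∀ (c : ℂ) (x y : H), x ∈ D → y ∈ D → v (c • x) y = conj c * v x y)
    (hsmul₂ : ∀ (c : ℂ) (x y : H), x ∈ D → y ∈ D → v x (c • y) = c * v x y)
    (hsym : ∀ x y, x ∈ D → y ∈ D → v x y = conj (v y x))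
    (hoff : ∀ x y, x ∈ D → y ∈ D → v (J x) y = -v x (J y))
    (v' : H → H → ℂ) (hv' : ∀ x y, v' x y = Complex.I * v x (J y)) :
    -- v' is symmetric on D
    (∀ x y, x ∈ D → y ∈ D → v' x y = conj (v' y x)) ∧
    -- v' is off-diagonal with respect to J
    (∀ x y, x ∈ D → y ∈ D → v' (J x) y = -v' x (J y)) ∧
    -- diagonal values in terms of the decomposition x = x₊ + x₋
    ∀ x, x ∈ D →
      v x x = 2 * (v ((2⁻¹ : ℂ) • (x + J x)) ((2⁻¹ : ℂ) • (x - J x))).re ∧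
      v' x x = 2 * (v ((2⁻¹ : ℂ) • (x + J x)) ((2⁻¹ : ℂ) • (x - J x))).im := by
  refine ⟨?_, ?_, ?_⟩
  · intro x y hx hy
    have h1 : v (J x) y = - v x (J y) := hoff x y hx hy
    have h2 : v (J x) y = conj (v y (J x)) := hsym _ _ (hJD x hx) hy
    rw [hv', hv', map_mul, Complex.conj_I, ← h2, h1]
    ring
  · intro x y hx hy
    rw [hv', hv', hoff x (J y) hx (hJD y hy), hJ2 y]
    ring
  · intro x hx
    set xp := (2⁻¹ : ℂ) • (x + J x) with hxp_def
    set xm := (2⁻¹ : ℂ) • (x - J x) with hxm_def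
    have hxp : xp ∈ D := D.smul_mem _ (D.add_mem hx (hJD x hx))
    have hxm : xm ∈ D := D.smul_mem _ (D.sub_mem hx (hJD x hx))
    have hJp : J xp = xp := by rw [hxp_def, map_smul, map_add, hJ2 x, add_comm]
    have hJm : J xm = -xm := by
      rw [hxm_def, map_smul, map_sub, hJ2 x, ← smul_neg, neg_sub]
    have hxx : x = xp + xm := by rw [hxp_def, hxm_def]; module
    have hJx : J x = xp - xm := by
      conv_lhs => rw [hxx]
      rw [map_add, hJp, hJm]; abel
    have hpp : v xp xp = 0 := by
      have h := hoff xp xp hxp hxp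
      rw [hJp] at h
      linear_combination h / 2
    have hmm : v xm xm = 0 := by
      have h := hoff xm xm hxm hxm
      rw [hJm, show (-xm) = (-1 : ℂ) • xm from (neg_one_smul ℂ xm).symm,
        hsmul₁ (-1) xm xm hxm hxm, hsmul₂ (-1) xm xm hxm hxm] at h
      simp only [map_neg, map_one] at h
      linear_combination -h / 2
    have hsm : v xm xp = conj (v xp xm) := hsym xm xp hxm hxp
    have hnm : (-1 : ℂ) • xm ∈ D := D.smul_mem _ hxm
    have e1 : v x x = v xp xp + v xp xm + (v xm xp + v xm xm) := by
      conv_lhs => rw [hxx]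
      rw [hadd₁ xp xm (xp + xm) hxp hxm (D.add_mem hxp hxm),
        hadd₂ xp xp xm hxp hxp hxm, hadd₂ xm xp xm hxm hxp hxm]
    have e2 : v x (J x) = v xp xp + (-1) * v xp xm + (v xm xp + (-1) * v xm xm) := by
      conv_lhs => rw [hJx, hxx, sub_eq_add_neg, show (-xm) = (-1 : ℂ) • xm from (neg_one_smul ℂ xm).symm]
      rw [hadd₁ xp xm (xp + (-1 : ℂ) • xm) hxp hxm (D.add_mem hxp hnm),
        hadd₂ xp xp ((-1 : ℂ) • xm) hxp hxp hnm,
        hadd₂ xm xp ((-1 : ℂ) • xm) hxm hxp hnm,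
        hsmul₂ (-1) xp xm hxp hxm, hsmul₂ (-1) xm xm hxm hxm]
    constructor
    · rw [e1, hpp, hmm, hsm, Complex.ext_iff]
      simp [Complex.add_re, Complex.add_im]
      ring
    · rw [hv', e2, hpp, hmm, hsm, Complex.ext_iff]
      simp [Complex.mul_re, Complex.mul_im]
      ring
end

section
/- With 𝔳 an off-diagonal symmetric form relative to J on D, 𝔳' its dual form 𝔳'[x,y] = i·𝔳[x,Jy], and 𝔞_μ a positive definite form on D satisfying 𝔞_μ[Jx,Jy] = 𝔞_μ[x,y], the relative bounds coincide: sup_{x≠0} |𝔳'[x,x]|/𝔞_μ[x,x] = sup_{x≠0} |𝔳[x,x]|/𝔞_μ[x,x]. -/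
/-!
Write `x = x₊ + x₋` with `J x₊ = x₊`, `J x₋ = -x₋`. The operator
`T = (1 + i)/2 + (1 - i)/2 • J` fixes `x₊` and multiplies `x₋` by `i`; in particular
`T² = J`, so `T` permutes the nonzero vectors of `D`. Since `𝔞_μ` is `J`-invariant it has no
cross terms between `x₊` and `x₋`, hence `𝔞_μ[Tx] = 𝔞_μ[x]`, while off-diagonality of `𝔳`
gives `𝔳'[Tx] = 𝔳[x]`. So both suprema run over the same family of quotients.
-/

open scoped ComplexConjugate ENNReal
open Complex

noncomputable section

section Involution

variable {E : Type*} [AddCommGroup E] [Module ℂ E] (J : E →ₗ[ℂ] E)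

def involutionSqrt : E →ₗ[ℂ] E :=
  ((1 + I) / 2) • LinearMap.id + ((1 - I) / 2) • J

variable {J}

lemma involutionSqrt_apply (x : E) :
    involutionSqrt J x = ((1 + I) / 2) • x + ((1 - I) / 2) • J x := rfl

lemma conj_one_add_I_div_two : conj ((1 + I) / 2) = (1 - I) / 2 := by
  simp [map_div₀, map_ofNat, sub_eq_add_neg]

lemma conj_one_sub_I_div_two : conj ((1 - I) / 2) = (1 + I) / 2 := by
  simp [map_div₀, map_ofNat, sub_eq_add_neg]

lemma involutionSqrt_involutionSqrt (hJ : ∀ x, J (J x) = x) (x : E) :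
    involutionSqrt J (involutionSqrt J x) = J x := by
  simp only [involutionSqrt_apply, map_add, map_smul, hJ]
  match_scalars
  · linear_combination (1 / 2 : ℂ) * I_sq
  · linear_combination (-1 / 2 : ℂ) * I_sq

lemma involutionSqrt_comm (x : E) : involutionSqrt J (J x) = J (involutionSqrt J x) := by
  simp only [involutionSqrt_apply, map_add, map_smul]

def involutionSqrtEquiv (hJ : ∀ x, J (J x) = x) : E ≃ₗ[ℂ] E :=
  LinearEquiv.ofLinearMap (involutionSqrt J) (J ∘ₗ involutionSqrt J)
    (LinearMap.ext fun x => by simp [← involutionSqrt_comm, involutionSqrt_involutionSqrt hJ, hJ])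
    (LinearMap.ext fun x => by simp [involutionSqrt_involutionSqrt hJ, hJ])

lemma apply_involutionSqrt_self_of_invariant (hJ : ∀ x, J (J x) = x)
    (B : E →ₗ⋆[ℂ] E →ₗ[ℂ] ℂ) (hB : ∀ x y, B (J x) (J y) = B x y) (x : E) :
    B (involutionSqrt J x) (involutionSqrt J x) = B x x := by
  have hJx : B (J x) x = B x (J x) := by simpa [hJ] using hB x (J x)
  simp only [involutionSqrt_apply, map_add, map_smulₛₗ, LinearMap.add_apply,
    LinearMap.smul_apply, smul_eq_mul, RingHom.id_apply, conj_one_add_I_div_two,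
    conj_one_sub_I_div_two, hJx, hB]
  linear_combination (B x (J x) / 2 - B x x / 2) * I_sq

lemma I_mul_apply_involutionSqrt_of_offDiag (hJ : ∀ x, J (J x) = x)
    (V : E →ₗ⋆[ℂ] E →ₗ[ℂ] ℂ) (hV : ∀ x y, V (J x) y = -V x (J y)) (x : E) :
    I * V (involutionSqrt J x) (J (involutionSqrt J x)) = V x x := by
  simp only [involutionSqrt_apply, map_add, map_smulₛₗ, LinearMap.add_apply,
    LinearMap.smul_apply, smul_eq_mul, RingHom.id_apply, conj_one_add_I_div_two,
    conj_one_sub_I_div_two, hJ, hV x]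
  linear_combination (- V x x) * I_sq

theorem iSup_dual_offDiag_eq {α : Type*} [SupSet α] (hJ : ∀ x, J (J x) = x)
    (A V : E →ₗ⋆[ℂ] E →ₗ[ℂ] ℂ) (hA : ∀ x y, A (J x) (J y) = A x y)
    (hV : ∀ x y, V (J x) y = -V x (J y)) (Φ : ℂ → ℂ → α) :
    ⨆ x : {x : E // x ≠ 0}, Φ (I * V x (J x)) (A x x) =
      ⨆ x : {x : E // x ≠ 0}, Φ (V x x) (A x x) := by
  let T := involutionSqrtEquiv hJ
  let e : {x : E // x ≠ 0} ≃ {x : E // x ≠ 0} :=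
    T.toEquiv.subtypeEquiv fun x => (T.map_ne_zero_iff (x := x)).symm
  rw [← e.surjective.iSup_comp]
  exact iSup_congr fun x => congrArg₂ Φ (I_mul_apply_involutionSqrt_of_offDiag hJ V hV x)
    (apply_involutionSqrt_self_of_invariant hJ A hA x)

end Involution

section Submodule

variable {H : Type*} [AddCommGroup H] [Module ℂ H] (D : Submodule ℂ H)

def Submodule.sesqFormOfOn (f : H → H → ℂ)
    (hadd₁ : ∀ x y z, x ∈ D → y ∈ D → z ∈ D → f (x + y) z = f x z + f y z)
    (hadd₂ : ∀ x y z, x ∈ D → y ∈ D → z ∈ D → f x (y + z) = f x y + f x z)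
    (hsmul₁ : ∀ (c : ℂ) (x y : H), x ∈ D → y ∈ D → f (c • x) y = conj c * f x y)
    (hsmul₂ : ∀ (c : ℂ) (x y : H), x ∈ D → y ∈ D → f x (c • y) = c * f x y) :
    D →ₗ⋆[ℂ] D →ₗ[ℂ] ℂ :=
  LinearMap.mk₂'ₛₗ _ _ (fun x y => f x y) (fun x y z => hadd₁ x y z x.2 y.2 z.2)
    (fun c x y => hsmul₁ c x y x.2 y.2) (fun x y z => hadd₂ x y z x.2 y.2 z.2)
    (fun c x y => hsmul₂ c x y x.2 y.2)

def Submodule.nonzeroEquiv : {x : H // x ∈ D ∧ x ≠ 0} ≃ {x : D // x ≠ 0} where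
  toFun x := ⟨⟨x.1, x.2.1⟩, D.coe_eq_zero.not.1 x.2.2⟩
  invFun x := ⟨x.1, x.1.2, D.coe_eq_zero.not.2 x.2⟩
  left_inv _ := rfl
  right_inv _ := rfl

end Submodule

end

theorem dual_offdiag_relative_bounds_eq_general
    {H : Type*} [NormedAddCommGroup H] [InnerProductSpace ℂ H]
    (J : H →L[ℂ] H) (hJ2 : ∀ x : H, J (J x) = x)
    (D : Submodule ℂ H) (hJD : ∀ x ∈ D, J x ∈ D)
    (aμ v : H → H → ℂ)
    -- aμ is a sesquilinear, symmetric, positive definite form on D, invariant under J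
    (haadd₁ : ∀ x y z, x ∈ D → y ∈ D → z ∈ D → aμ (x + y) z = aμ x z + aμ y z)
    (haadd₂ : ∀ x y z, x ∈ D → y ∈ D → z ∈ D → aμ x (y + z) = aμ x y + aμ x z)
    (hasmul₁ : ∀ (c : ℂ) (x y : H), x ∈ D → y ∈ D → aμ (c • x) y = conj c * aμ x y)
    (hasmul₂ : ∀ (c : ℂ) (x y : H), x ∈ D → y ∈ D → aμ x (c • y) = c * aμ x y)
    (haJ : ∀ x y, x ∈ D → y ∈ D → aμ (J x) (J y) = aμ x y)
    -- v is a sesquilinear, symmetric, off-diagonal form on D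
    (hadd₁ : ∀ x y z, x ∈ D → y ∈ D → z ∈ D → v (x + y) z = v x z + v y z)
    (hadd₂ : ∀ x y z, x ∈ D → y ∈ D → z ∈ D → v x (y + z) = v x y + v x z)
    (hsmul₁ : ∀ (c : ℂ) (x y : H), x ∈ D → y ∈ D → v (c • x) y = conj c * v x y)
    (hsmul₂ : ∀ (c : ℂ) (x y : H), x ∈ D → y ∈ D → v x (c • y) = c * v x y)
    (hoff : ∀ x y, x ∈ D → y ∈ D → v (J x) y = -v x (J y))
    -- the dual form
    (v' : H → H → ℂ) (hv' : ∀ x y, v' x y = Complex.I * v x (J y)) :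
    (⨆ x : {x : H // x ∈ D ∧ x ≠ 0},
        ENNReal.ofReal (‖v' x.1 x.1‖ / (aμ x.1 x.1).re)) =
      ⨆ x : {x : H // x ∈ D ∧ x ≠ 0},
        ENNReal.ofReal (‖v x.1 x.1‖ / (aμ x.1 x.1).re) := by
  let JD : D →ₗ[ℂ] D := (J : H →ₗ[ℂ] H).restrict hJD
  let A := D.sesqFormOfOn aμ haadd₁ haadd₂ hasmul₁ hasmul₂
  let V := D.sesqFormOfOn v hadd₁ hadd₂ hsmul₁ hsmul₂
  simp only [← D.nonzeroEquiv.symm.surjective.iSup_comp, hv']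
  exact iSup_dual_offDiag_eq (J := JD) (fun x => Subtype.ext (hJ2 x)) A V
    (fun x y => haJ x y x.2 y.2) (fun x y => hoff x y x.2 y.2)
    fun z a => ENNReal.ofReal (‖z‖ / a.re)

/-- For an off-diagonal symmetric form `v` relative to `J` on `D`, its dual
`v'[x,y] = i·v[x, Jy]`, and a positive definite `J`-invariant form `aμ` on `D`, the relative
bounds coincide: `sup_{x≠0} |v'[x]|/aμ[x] = sup_{x≠0} |v[x]|/aμ[x]` (as extended reals). -/
theorem dual_offdiag_relative_bounds_eq
    {H : Type*} [NormedAddCommGroup H] [InnerProductSpace ℂ H] [CompleteSpace H]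
    (J : H →L[ℂ] H) (hJsa : IsSelfAdjoint J) (hJ2 : ∀ x : H, J (J x) = x)
    (D : Submodule ℂ H) (hJD : ∀ x ∈ D, J x ∈ D)
    (aμ v : H → H → ℂ)
    -- aμ is a sesquilinear, symmetric, positive definite form on D, invariant under J
    (haadd₁ : ∀ x y z, x ∈ D → y ∈ D → z ∈ D → aμ (x + y) z = aμ x z + aμ y z)
    (haadd₂ : ∀ x y z, x ∈ D → y ∈ D → z ∈ D → aμ x (y + z) = aμ x y + aμ x z)
    (hasmul₁ : ∀ (c : ℂ) (x y : H), x ∈ D → y ∈ D → aμ (c • x) y = conj c * aμ x y)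
    (hasmul₂ : ∀ (c : ℂ) (x y : H), x ∈ D → y ∈ D → aμ x (c • y) = c * aμ x y)
    (hasym : ∀ x y, x ∈ D → y ∈ D → aμ x y = conj (aμ y x))
    (hapos : ∀ x, x ∈ D → x ≠ 0 → 0 < (aμ x x).re)
    (haJ : ∀ x y, x ∈ D → y ∈ D → aμ (J x) (J y) = aμ x y)
    -- v is a sesquilinear, symmetric, off-diagonal form on D
    (hadd₁ : ∀ x y z, x ∈ D → y ∈ D → z ∈ D → v (x + y) z = v x z + v y z)
    (hadd₂ : ∀ x y z, x ∈ D → y ∈ D → z ∈ D → v x (y + z) = v x y + v x z)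
    (hsmul₁ : ∀ (c : ℂ) (x y : H), x ∈ D → y ∈ D → v (c • x) y = conj c * v x y)
    (hsmul₂ : ∀ (c : ℂ) (x y : H), x ∈ D → y ∈ D → v x (c • y) = c * v x y)
    (hsym : ∀ x y, x ∈ D → y ∈ D → v x y = conj (v y x))
    (hoff : ∀ x y, x ∈ D → y ∈ D → v (J x) y = -v x (J y))
    -- the dual form
    (v' : H → H → ℂ) (hv' : ∀ x y, v' x y = Complex.I * v x (J y)) :
    (⨆ x : {x : H // x ∈ D ∧ x ≠ 0},
        ENNReal.ofReal (‖v' x.1 x.1‖ / (aμ x.1 x.1).re)) =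
      ⨆ x : {x : H // x ∈ D ∧ x ≠ 0},
        ENNReal.ofReal (‖v x.1 x.1‖ / (aμ x.1 x.1).re) :=
  dual_offdiag_relative_bounds_eq_general J hJ2 D hJD aμ v haadd₁ haadd₂ hasmul₁ hasmul₂ haJ hadd₁
    hadd₂ hsmul₁ hsmul₂ hoff v' hv'
end

section
/- Let T be a bounded sectorial operator on a Hilbert space with numerical range contained in the sector {z : |arg z| ≤ θ}, θ < π/2, and assume T has a bounded inverse. If T = U|T| is the polar decomposition with U unitary, then U is sectorial with semi-angle θ; in particular the spectrum of U is contained in the arc {e^{iφ} : |φ| ≤ θ}, and ‖I - U‖ ≤ 2 sin(θ/2). -/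
/-!
The closed sector `|arg w| ≤ θ` is cut out by the three half-planes `0 ≤ re (c w)`,
`c ∈ {1, tan θ + i, tan θ - i}`, and each of them contains the numerical range of `T`.
For `z` outside such a half-plane, `T - z R` is coercive because `R` is strictly positive, and
`U - z = (T - z R) R⁻¹`; so the spectrum of `U` lies in the sector. As `U` is normal,
`ℜ (c U) = cfc re (c U)` is positive once the spectrum of `c U` lies in the right half-plane,
which brings the numerical range of `U` back into each half-plane. The norm bound is the
continuous functional calculus for `1 - z` on the arc.
-/

open scoped InnerProductSpace ComplexOrder ComplexStarModule
open Complex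

lemma Complex.abs_arg_le_iff_of_re_pos {θ : ℝ} (hθ0 : 0 ≤ θ) (hθ : θ < Real.pi / 2)
    {w : ℂ} (hw : 0 < w.re) :
    |arg w| ≤ θ ↔ w.im ≤ Real.tan θ * w.re ∧ -w.im ≤ Real.tan θ * w.re := by
  have harg : arg w ∈ Set.Ioo (-(Real.pi / 2)) (Real.pi / 2) :=
    abs_lt.mp (abs_arg_lt_pi_div_two_iff.mpr (.inl hw))
  have hθ_mem (s : ℝ) (hs : |s| = θ) : s ∈ Set.Ioo (-(Real.pi / 2)) (Real.pi / 2) :=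
    abs_lt.mp (hs ▸ hθ)
  rw [abs_le, ← Real.strictMonoOn_tan.le_iff_le harg (hθ_mem θ (abs_of_nonneg hθ0)),
    ← Real.strictMonoOn_tan.le_iff_le (hθ_mem (-θ) (by simp [abs_of_nonneg hθ0])) harg,
    tan_arg, Real.tan_neg, div_le_iff₀ hw, le_div_iff₀ hw]
  constructor <;> rintro ⟨h₁, h₂⟩ <;> constructor <;> linarith

lemma Complex.abs_arg_le_iff_forall_re_mul_nonneg {θ : ℝ} (hθ0 : 0 ≤ θ)
    (hθ : θ < Real.pi / 2) (w : ℂ) :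
    (w ≠ 0 → |arg w| ≤ θ) ↔
      ∀ c ∈ ({1, Real.tan θ + I, Real.tan θ - I} : Set ℂ), 0 ≤ (c * w).re := by
  simp only [Set.mem_insert_iff, Set.mem_singleton_iff, forall_eq_or_imp, forall_eq, one_mul,
    mul_re, add_re, sub_re, add_im, sub_im, ofReal_re, ofReal_im, I_re, I_im, add_zero, sub_zero,
    zero_add, zero_sub, neg_one_mul, sub_nonneg, one_re, one_im, zero_mul]
  rcases eq_or_ne w 0 with rfl | hw
  · simp
  refine ⟨fun h ↦ ?_, fun ⟨hre, h₁, h₂⟩ _ ↦ ?_⟩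
  · have hre : 0 < w.re := by
      simpa [hw] using abs_arg_lt_pi_div_two_iff.mp ((h hw).trans_lt hθ)
    have := (abs_arg_le_iff_of_re_pos hθ0 hθ hre).mp (h hw)
    refine ⟨hre.le, ?_, ?_⟩ <;> linarith
  · have hre : 0 < w.re := by
      refine hre.lt_of_ne fun h0 ↦ hw (ext h0.symm ?_)
      rw [← h0, mul_zero] at h₁ h₂
      rw [zero_im]
      linarith
    exact (abs_arg_le_iff_of_re_pos hθ0 hθ hre).mpr ⟨by linarith, by linarith⟩

lemma Complex.norm_one_sub_exp_mul_I_le {φ θ : ℝ} (hφ : |φ| ≤ θ) (hθ : θ ≤ Real.pi) :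
    ‖1 - exp (φ * I)‖ ≤ 2 * Real.sin (θ / 2) := by
  rw [norm_sub_rev, mul_comm, norm_exp_I_mul_ofReal_sub_one, norm_mul, Real.norm_two,
    Real.norm_eq_abs]
  obtain ⟨hφ₁, hφ₂⟩ := abs_le.mp hφ
  gcongr
  refine abs_le.mpr ⟨?_, ?_⟩
  · rw [← Real.sin_neg]
    exact Real.sin_le_sin_of_le_of_le_pi_div_two (by linarith) (by linarith) (by linarith)
  · exact Real.sin_le_sin_of_le_of_le_pi_div_two (by linarith) (by linarith) (by linarith)

namespace ContinuousLinearMap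

variable {H : Type*} [NormedAddCommGroup H] [InnerProductSpace ℂ H]

lemma re_mul_inner_map_self_nonneg_of_norm_eq_one {T : H →L[ℂ] H} {c : ℂ}
    (h : ∀ x, ‖x‖ = 1 → 0 ≤ (c * ⟪x, T x⟫_ℂ).re) (x : H) : 0 ≤ (c * ⟪x, T x⟫_ℂ).re := by
  rcases eq_or_ne x 0 with rfl | hx
  · simp
  have hx' : ‖x‖ ≠ 0 := norm_ne_zero_iff.mpr hx
  set u := (‖x‖⁻¹ : ℂ) • x
  have hscale : ⟪x, T x⟫_ℂ = ((‖x‖ ^ 2 : ℝ) : ℂ) * ⟪u, T u⟫_ℂ := by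
    simp only [u, map_smul, inner_smul_left, inner_smul_right, map_inv₀, conj_ofReal]
    push_cast
    field_simp
  rw [hscale, mul_left_comm, re_ofReal_mul]
  exact mul_nonneg (by positivity) (h u (by simp [u, norm_smul, hx']))

variable [CompleteSpace H]

lemma inner_realPart_apply (N : H →L[ℂ] H) (x : H) :
    ⟪x, (ℜ N : H →L[ℂ] H) x⟫_ℂ = ((⟪x, N x⟫_ℂ).re : ℂ) := by
  rw [realPart_apply_coe, re_eq_add_conj, star_eq_adjoint]
  simp only [smul_apply, add_apply, inner_smul_right_eq_smul, inner_add_right,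
    adjoint_inner_right, inner_conj_symm, Complex.real_smul]
  push_cast
  ring

lemma re_inner_map_self_nonneg_of_spectrum {N : H →L[ℂ] H} [IsStarNormal N]
    (h : ∀ z ∈ spectrum ℂ N, 0 ≤ z.re) (x : H) : 0 ≤ (⟪x, N x⟫_ℂ).re := by
  have hpos : 0 ≤ (ℜ N : H →L[ℂ] H) := by
    rw [← cfc_re_id N]
    exact cfc_nonneg fun z hz ↦ by simpa [Complex.nonneg_iff] using h z hz
  simpa [inner_realPart_apply] using
    ((nonneg_iff_isPositive _).mp hpos).re_inner_nonneg_right x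

lemma re_mul_inner_map_self_nonneg_of_spectrum {N : H →L[ℂ] H} [IsStarNormal N] {c : ℂ}
    (h : ∀ z ∈ spectrum ℂ N, 0 ≤ (c * z).re) (x : H) : 0 ≤ (c * ⟪x, N x⟫_ℂ).re := by
  rcases eq_or_ne c 0 with rfl | hc
  · simp
  have hspec : ∀ z ∈ spectrum ℂ (c • N), 0 ≤ z.re := by
    have := spectrum.unit_smul_eq_smul N (Units.mk0 c hc)
    rw [Units.smul_def, Units.val_mk0] at this
    rw [this]
    rintro _ ⟨z, hz, rfl⟩
    exact h z hz
  simpa [inner_smul_right] using re_inner_map_self_nonneg_of_spectrum hspec x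

lemma exists_pos_mul_norm_sq_le_re_inner_of_isStrictlyPositive {R : H →L[ℂ] H}
    (hR : IsStrictlyPositive R) : ∃ r > 0, ∀ x, r * ‖x‖ ^ 2 ≤ (⟪x, R x⟫_ℂ).re := by
  rcases subsingleton_or_nontrivial H with hH | hH
  · exact ⟨1, one_pos, fun x ↦ by simp [Subsingleton.elim x 0]⟩
  obtain ⟨r, hr, hrR⟩ := (CFC.exists_pos_algebraMap_le_iff hR.isSelfAdjoint).mpr
    fun _ ↦ hR.spectrum_pos
  refine ⟨r, hr, fun x ↦ ?_⟩
  simpa [Algebra.algebraMap_eq_smul_one, inner_sub_right, inner_smul_right_eq_smul,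
    inner_self_eq_norm_sq_to_K, ← ofReal_pow] using
    ((le_def _ _).mp hrR).re_inner_nonneg_right x

lemma re_nonneg_of_mem_spectrum_of_eq_mul {T U R : H →L[ℂ] H} (hR : IsStrictlyPositive R)
    (hTUR : T = U * R) (hT : ∀ x, 0 ≤ (⟪x, T x⟫_ℂ).re) {z : ℂ} (hz : z ∈ spectrum ℂ U) :
    0 ≤ z.re := by
  by_contra! hz_neg
  obtain ⟨r, hr, hRr⟩ := exists_pos_mul_norm_sq_le_re_inner_of_isStrictlyPositive hR
  have hR_pos := (nonneg_iff_isPositive R).mp hR.nonneg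
  set B := T - z • R
  have hB : ∀ x, ‖x‖ ^ 2 * (-z.re * r) ≤ ‖⟪B x, x⟫_ℂ‖ := fun x ↦ by
    have hRx : ⟪x, R x⟫_ℂ = ((⟪x, R x⟫_ℂ).re : ℂ) :=
      eq_re_of_ofReal_le (r := 0) (by exact_mod_cast hR_pos.inner_nonneg_right x)
    have hre : (⟪x, B x⟫_ℂ).re = (⟪x, T x⟫_ℂ).re - z.re * (⟪x, R x⟫_ℂ).re := by
      rw [sub_apply, inner_sub_right, smul_apply, inner_smul_right, hRx]
      simp
    calc ‖x‖ ^ 2 * (-z.re * r) ≤ (⟪x, B x⟫_ℂ).re := by nlinarith [hT x, hRr x]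
      _ ≤ ‖⟪B x, x⟫_ℂ‖ := by rw [norm_inner_symm]; exact re_le_norm _
  have hc : 0 < -z.re * r := by nlinarith
  have hB_unit : IsUnit B :=
    isUnit_of_forall_le_norm_inner_map B (c := ⟨-z.re * r, hc.le⟩) (NNReal.coe_pos.mp hc) hB
  obtain ⟨R, rfl⟩ := hR.isUnit
  have hU : algebraMap ℂ _ z - U = -(B * ↑R⁻¹) := by
    simp [B, hTUR, sub_mul, mul_assoc, Algebra.algebraMap_eq_smul_one]
  exact spectrum.mem_iff.mp hz (hU ▸ (hB_unit.mul R⁻¹.isUnit).neg)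

lemma re_mul_nonneg_of_mem_spectrum_of_eq_mul {T U R : H →L[ℂ] H} (hR : IsStrictlyPositive R)
    (hTUR : T = U * R) {c : ℂ} (hT : ∀ x, 0 ≤ (c * ⟪x, T x⟫_ℂ).re) {z : ℂ}
    (hz : z ∈ spectrum ℂ U) : 0 ≤ (c * z).re := by
  rcases eq_or_ne c 0 with rfl | hc
  · simp
  refine re_nonneg_of_mem_spectrum_of_eq_mul hR (T := c • T) (U := c • U)
    (by rw [hTUR, smul_mul_assoc]) (fun x ↦ by simpa [inner_smul_right] using hT x) ?_
  exact spectrum.smul_mem_smul_iff (r := Units.mk0 c hc) |>.mpr hz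

end ContinuousLinearMap

lemma Unitary.norm_one_sub_le_of_abs_arg_le {A : Type*} [CStarAlgebra A] {u : A}
    (hu : u ∈ unitary A) {θ : ℝ} (hθ0 : 0 ≤ θ) (hθ : θ ≤ Real.pi)
    (h : ∀ z ∈ spectrum ℂ u, |arg z| ≤ θ) : ‖1 - u‖ ≤ 2 * Real.sin (θ / 2) := by
  have := isStarNormal_of_mem_unitary hu
  have hsin : 0 ≤ 2 * Real.sin (θ / 2) :=
    mul_nonneg zero_le_two (Real.sin_nonneg_of_nonneg_of_le_pi (by linarith) (by linarith))
  have hcfc : 1 - u = cfc (fun z : ℂ ↦ 1 - z) u := by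
    rw [cfc_sub .., cfc_const_one .., cfc_id' ..]
  rw [hcfc]
  refine norm_cfc_le hsin fun z hz ↦ ?_
  have hz_exp : exp (arg z * I) = z := by
    simpa [spectrum.norm_eq_one_of_unitary hu hz] using norm_mul_exp_arg_mul_I z
  rw [← hz_exp]
  exact norm_one_sub_exp_mul_I_le (h z hz) hθ

open ContinuousLinearMap

theorem unitary_part_of_sectorial_general
    {H : Type*} [NormedAddCommGroup H] [InnerProductSpace ℂ H] [CompleteSpace H]
    (T U R : H →L[ℂ] H) (θ : ℝ) (hθ0 : 0 ≤ θ) (hθ : θ < Real.pi / 2)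
    (hTinv : ∃ S : H →L[ℂ] H, T ∘L S = 1 ∧ S ∘L T = 1)
    (hsec : ∀ x : H, ‖x‖ = 1 → ⟪x, T x⟫_ℂ ≠ 0 → |Complex.arg ⟪x, T x⟫_ℂ| ≤ θ)
    -- polar decomposition: R = |T| = (T*T)^{1/2}, U unitary, T = U R
    (hRsa : IsSelfAdjoint R) (hRpos : ∀ x : H, 0 ≤ (⟪x, R x⟫_ℂ).re)
    (hU : U ∈ unitary (H →L[ℂ] H)) (hTUR : T = U ∘L R) :
    (∀ x : H, ‖x‖ = 1 → ⟪x, U x⟫_ℂ ≠ 0 → |Complex.arg ⟪x, U x⟫_ℂ| ≤ θ) ∧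
    (spectrum ℂ U ⊆ {z : ℂ | ∃ φ : ℝ, |φ| ≤ θ ∧ z = Complex.exp (φ * Complex.I)}) ∧
    ‖(1 : H →L[ℂ] H) - U‖ ≤ 2 * Real.sin (θ / 2) := by
  have hsector := abs_arg_le_iff_forall_re_mul_nonneg hθ0 hθ
  have hT_unit : IsUnit T := by
    obtain ⟨S, hTS, hST⟩ := hTinv
    exact ⟨⟨T, S, hTS, hST⟩, rfl⟩
  have hR_nonneg : 0 ≤ R := (nonneg_iff_isPositive R).mpr <| isPositive_def'.mpr
    ⟨hRsa, fun x ↦ by rw [reApplyInnerSelf, inner_re_symm]; exact hRpos x⟩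
  have hR : IsStrictlyPositive R := IsStrictlyPositive.iff_of_unital.mpr
    ⟨hR_nonneg, (Unitary.isUnit_coe (U := ⟨U, hU⟩)).mul_left_iff.mp (by rwa [hTUR] at hT_unit)⟩
  have hT c (hc : c ∈ _) x := re_mul_inner_map_self_nonneg_of_norm_eq_one
    (fun x hx ↦ (hsector _).mp (hsec x hx) c hc) x
  have hspec : ∀ z ∈ spectrum ℂ U, ‖z‖ = 1 ∧ |arg z| ≤ θ := fun z hz ↦ by
    have hz1 := spectrum.norm_eq_one_of_unitary hU hz
    refine ⟨hz1, (hsector z).mpr (fun c hc ↦ ?_) (norm_ne_zero_iff.mp (by simp [hz1]))⟩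
    exact re_mul_nonneg_of_mem_spectrum_of_eq_mul hR hTUR (hT c hc) hz
  have := isStarNormal_of_mem_unitary hU
  refine ⟨fun x _ ↦ (hsector _).mpr fun c hc ↦ ?_, fun z hz ↦ ⟨arg z, (hspec z hz).2, ?_⟩,
    Unitary.norm_one_sub_le_of_abs_arg_le hU hθ0 (by linarith [Real.pi_pos])
      fun z hz ↦ (hspec z hz).2⟩
  · exact re_mul_inner_map_self_nonneg_of_spectrum
      (fun z hz ↦ (hsector z).mp (fun _ ↦ (hspec z hz).2) c hc) x
  · simpa [(hspec z hz).1] using (norm_mul_exp_arg_mul_I z).symm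

/-- If `T` is a bounded invertible sectorial operator with numerical range in the sector
`{z : |arg z| ≤ θ}`, `0 ≤ θ < π/2`, and `T = U R` is its polar decomposition (`R = |T|`
positive with `R² = T*T`, `U` unitary), then `U` is sectorial with semi-angle `θ`: its
numerical range lies in the sector, its spectrum lies in the arc `{e^{iφ} : |φ| ≤ θ}`,
and `‖1 - U‖ ≤ 2 sin(θ/2)`. -/
theorem unitary_part_of_sectorial
    {H : Type*} [NormedAddCommGroup H] [InnerProductSpace ℂ H] [CompleteSpace H]
    (T U R : H →L[ℂ] H) (θ : ℝ) (hθ0 : 0 ≤ θ) (hθ : θ < Real.pi / 2)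
    (hTinv : ∃ S : H →L[ℂ] H, T ∘L S = 1 ∧ S ∘L T = 1)
    (hsec : ∀ x : H, ‖x‖ = 1 → ⟪x, T x⟫_ℂ ≠ 0 → |Complex.arg ⟪x, T x⟫_ℂ| ≤ θ)
    -- polar decomposition: R = |T| = (T*T)^{1/2}, U unitary, T = U R
    (hRsa : IsSelfAdjoint R) (hRpos : ∀ x : H, 0 ≤ (⟪x, R x⟫_ℂ).re)
    (hR2 : R ∘L R = ContinuousLinearMap.adjoint T ∘L T)
    (hU : U ∈ unitary (H →L[ℂ] H)) (hTUR : T = U ∘L R) :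
    (∀ x : H, ‖x‖ = 1 → ⟪x, U x⟫_ℂ ≠ 0 → |Complex.arg ⟪x, U x⟫_ℂ| ≤ θ) ∧
    (spectrum ℂ U ⊆ {z : ℂ | ∃ φ : ℝ, |φ| ≤ θ ∧ z = Complex.exp (φ * Complex.I)}) ∧
    ‖(1 : H →L[ℂ] H) - U‖ ≤ 2 * Real.sin (θ / 2) :=
  unitary_part_of_sectorial_general T U R θ hθ0 hθ hTinv hsec hRsa hRpos hU hTUR
end

section
/- Let α < β be real numbers and w ∈ ℂ. Let A = [[β, 0],[0, α]] and B = [[β, w],[conj(w), α]] be 2×2 Hermitian matrices. Let P be the orthogonal projection onto the eigenspace of A for the eigenvalue α, and Q the orthogonal projection onto the eigenspace of B for its smaller eigenvalue. Then ‖P - Q‖ = sin((1/2) arctan(2|w|/(β - α))). -/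
open scoped Matrix.Norms.L2Operator

/-!
`P - Q` is a Hermitian matrix with zero trace, so by Cayley–Hamilton its square is a scalar, namely
`Q₀₀ • 1`; hence `‖P - Q‖ = √Q₀₀`. The first row of `B Q = μ Q`, together with `Q = Qᴴ` and
`tr Q = 1`, gives `Q₀₀ = |w|² / ((β - μ)² + |w|²)`. With `a = (β - α)/2` and `r = √(a² + |w|²)`
we have `β - μ = a + r`, and the vector `(a + r, |w|)` bisects the angle between `(1, 0)` and
`(a, |w|)`, so `Q₀₀ = sin² (arctan (|w|/a) / 2)`.
-/

theorem Real.sin_half_arctan_div_eq_sqrt {a b : ℝ} (ha : 0 < a) (hb : 0 ≤ b) :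
    Real.sin (Real.arctan (b / a) / 2) = √(b ^ 2 / ((a + √(a ^ 2 + b ^ 2)) ^ 2 + b ^ 2)) := by
  have hr : √(a ^ 2 + b ^ 2) ^ 2 = a ^ 2 + b ^ 2 := Real.sq_sqrt (by positivity)
  have hr0 : 0 < √(a ^ 2 + b ^ 2) := Real.sqrt_pos.2 (by positivity)
  have hcos : √(1 + (b / a) ^ 2) = √(a ^ 2 + b ^ 2) / a := by
    rw [Real.sqrt_eq_iff_mul_self_eq_of_pos (by positivity)]
    field_simp
    linear_combination hr
  have hsq : Real.sin (Real.arctan (b / a) / 2) ^ 2 =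
      b ^ 2 / ((a + √(a ^ 2 + b ^ 2)) ^ 2 + b ^ 2) := by
    rw [Real.sin_sq_eq_half_sub, mul_div_cancel₀ _ two_ne_zero, Real.cos_arctan, hcos]
    field_simp
    linear_combination (a + √(a ^ 2 + b ^ 2)) * hr
  have hsin : 0 ≤ Real.sin (Real.arctan (b / a) / 2) := by
    apply Real.sin_nonneg_of_nonneg_of_le_pi
    · exact div_nonneg (Real.arctan_nonneg.2 (by positivity)) zero_le_two
    · linarith [Real.arctan_lt_pi_div_two (b / a), Real.pi_pos]
  rw [← hsq, Real.sqrt_sq hsin]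

namespace Matrix

theorem IsHermitian.l2_opNorm_eq_sqrt_of_mul_self_eq {n : Type*} [Fintype n] [DecidableEq n]
    [Nonempty n] {M : Matrix n n ℂ} (hM : M.IsHermitian) {c : ℝ} (hc : 0 ≤ c)
    (hsq : M * M = (c : ℂ) • 1) : ‖M‖ = √c := by
  have hnorm : ‖M‖ * ‖M‖ = c := by
    rw [← l2_opNorm_conjTranspose_mul_self, hM.eq, hsq, norm_smul, norm_one, mul_one,
      Complex.norm_real, Real.norm_of_nonneg hc]
  rw [← hnorm, Real.sqrt_mul_self (norm_nonneg M)]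

theorem mul_self_diag_sub_of_trace_eq_one {R : Type*} [CommRing R]
    {Q : Matrix (Fin 2) (Fin 2) R} (hQ : IsIdempotentElem Q) (htr : Q.trace = 1) :
    (!![0, 0; 0, 1] - Q) * (!![0, 0; 0, 1] - Q) = Q 0 0 • (1 : Matrix (Fin 2) (Fin 2) R) := by
  have h00 := congrFun (congrFun hQ.eq 0) 0
  rw [trace_fin_two] at htr
  simp only [mul_apply, Fin.sum_univ_two] at h00
  ext i j
  fin_cases i <;> fin_cases j <;> simp [mul_apply, Fin.sum_univ_two]
  · exact h00
  · linear_combination Q 0 1 * htr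
  · linear_combination Q 1 0 * htr
  · linear_combination h00 - (1 - Q 1 1 + Q 0 0) * htr

theorem IsHermitian.apply_zero_zero_mul_of_mul_eq_smul {β μ : ℝ} {w : ℂ}
    {B Q : Matrix (Fin 2) (Fin 2) ℂ} (hB00 : B 0 0 = β) (hB01 : B 0 1 = w)
    (hQ : Q.IsHermitian) (htr : Q.trace = 1) (heig : B * Q = (μ : ℂ) • Q) :
    Q 0 0 * (((β - μ) ^ 2 + ‖w‖ ^ 2 : ℝ) : ℂ) = (‖w‖ ^ 2 : ℝ) := by
  have row0 := congrFun (congrFun heig 0) 0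
  have row1 := congrFun (congrFun heig 0) 1
  simp only [mul_apply, Fin.sum_univ_two, smul_apply, smul_eq_mul, hB00, hB01] at row0 row1
  have h01 : starRingEnd ℂ (Q 0 1) = Q 1 0 := hQ.apply 1 0
  have h11 : starRingEnd ℂ (Q 1 1) = Q 1 1 := hQ.apply 1 1
  have row1' := congrArg (starRingEnd ℂ) row1
  simp only [map_add, map_mul, Complex.conj_ofReal, h01, h11] at row1'
  rw [trace_fin_two] at htr
  have hw : (‖w‖ : ℂ) ^ 2 = w * starRingEnd ℂ w := by
    rw [Complex.mul_conj, Complex.normSq_eq_norm_sq]; push_cast; ring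
  push_cast
  linear_combination (-w) * row1' + ((β : ℂ) - μ) * row0 + (‖w‖ : ℂ) ^ 2 * htr - Q 1 1 * hw

end Matrix

/-- For `A = [[β,0],[0,α]]`, `B = [[β,w],[conj w, α]]` with `α < β`, the orthogonal projection
`P = diag(0,1)` onto the `α`-eigenspace of `A` and the orthogonal projection `Q` onto the
eigenspace of `B` for its smaller eigenvalue `(α+β)/2 - √((β-α)²/4 + |w|²)` satisfy
`‖P - Q‖ = sin((1/2) arctan(2|w|/(β - α)))` in the operator norm on `ℂ²`. -/
theorem two_by_two_tan_two_theta (α β : ℝ) (hαβ : α < β) (w : ℂ)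
    (B : Matrix (Fin 2) (Fin 2) ℂ)
    (hB : B = !![(β : ℂ), w; (starRingEnd ℂ) w, (α : ℂ)])
    (Q : Matrix (Fin 2) (Fin 2) ℂ)
    (hQherm : Q.IsHermitian) (hQidem : Q * Q = Q) (hQtr : Q.trace = 1)
    (hQeig : B * Q =
      (((α + β) / 2 - Real.sqrt ((β - α) ^ 2 / 4 + ‖w‖ ^ 2) : ℝ) : ℂ) • Q) :
    ‖(!![(0 : ℂ), 0; 0, 1] : Matrix (Fin 2) (Fin 2) ℂ) - Q‖ =
      Real.sin ((1 / 2) * Real.arctan (2 * ‖w‖ / (β - α))) := by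
  set a := (β - α) / 2 with ha_def
  have ha : 0 < a := half_pos (sub_pos.2 hαβ)
  rw [show (β - α) ^ 2 / 4 = a ^ 2 by rw [ha_def]; ring] at hQeig
  have hgap : β - ((α + β) / 2 - √(a ^ 2 + ‖w‖ ^ 2)) = a + √(a ^ 2 + ‖w‖ ^ 2) := by
    rw [ha_def]; ring
  have hQ00 : Q 0 0 = ((‖w‖ ^ 2 / ((a + √(a ^ 2 + ‖w‖ ^ 2)) ^ 2 + ‖w‖ ^ 2) : ℝ) : ℂ) := by
    have h := hQherm.apply_zero_zero_mul_of_mul_eq_smul (β := β) (w := w)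
      (by simp [hB]) (by simp [hB]) hQtr hQeig
    rw [hgap] at h
    rw [Complex.ofReal_div, eq_div_iff (Complex.ofReal_ne_zero.2 (by positivity)), h]
  have hPQ : ((!![0, 0; 0, 1] : Matrix (Fin 2) (Fin 2) ℂ) - Q).IsHermitian := by
    refine Matrix.IsHermitian.sub ?_ hQherm
    ext i j; fin_cases i <;> fin_cases j <;> simp
  have hsq := Matrix.mul_self_diag_sub_of_trace_eq_one hQidem hQtr
  rw [hQ00] at hsq
  have hangle : 1 / 2 * Real.arctan (2 * ‖w‖ / (β - α)) = Real.arctan (‖w‖ / a) / 2 := by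
    rw [ha_def, div_div_eq_mul_div, mul_comm ‖w‖ 2]; ring
  rw [hPQ.l2_opNorm_eq_sqrt_of_mul_self_eq (by positivity) hsq, hangle,
    Real.sin_half_arctan_div_eq_sqrt ha (norm_nonneg w)]
end

section
/- Let 𝔞_J be a positive definite symmetric sesquilinear form on a J-invariant subspace D (J a self-adjoint involution, 𝔞_J[Jx,Jy]=𝔞_J[x,y]) and 𝔳 a symmetric off-diagonal form on D with finite relative bound v₀ = sup_{x≠0}|𝔳[x]|/𝔞_J[x]. Then the form 𝔞_J + 𝔳 is nonnegative if and only if v₀ ≤ 1. -/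
/-!
The relative numerical range of an off-diagonal form is symmetric about the origin: the flip
`x ↦ J x` preserves `aJ[x]` and changes the sign of `v[x]`. Hence `aJ + v ≥ 0` holds iff
`aJ - v ≥ 0` holds as well, i.e. iff `|v[x]| ≤ aJ[x]` for every `x`, which says `v₀ ≤ 1`.
-/

open scoped ComplexConjugate

theorem Complex.norm_le_of_im_eq_zero {z : ℂ} {a : ℝ} (hz : z.im = 0)
    (hadd : 0 ≤ a + z.re) (hsub : 0 ≤ a - z.re) : ‖z‖ ≤ a := by
  rw [← Complex.abs_re_eq_norm.mpr hz, abs_le]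
  constructor <;> linarith

theorem Complex.add_re_nonneg_of_norm_le {z : ℂ} {a : ℝ} (h : ‖z‖ ≤ a) : 0 ≤ a + z.re := by
  have := Complex.abs_re_le_norm z
  have := neg_abs_le z.re
  linarith

section Forms

variable {E : Type*}

theorem im_apply_self_eq_zero_of_conj_symm {v : E → E → ℂ} {D : Set E}
    (hsym : ∀ x y, x ∈ D → y ∈ D → v x y = conj (v y x)) {x : E} (hx : x ∈ D) :
    (v x x).im = 0 :=
  Complex.conj_eq_iff_im.mp (hsym x x hx hx).symm

theorem apply_zero_zero_of_conj_smul_left [AddCommGroup E] [Module ℂ E] {f : E → E → ℂ}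
    {D : Submodule ℂ E} (hsmul : ∀ (c : ℂ) (x y : E), x ∈ D → y ∈ D → f (c • x) y = conj c * f x y) :
    f 0 0 = 0 := by
  simpa using hsmul 0 0 0 D.zero_mem D.zero_mem

theorem apply_self_involution_of_anticomm {v : E → E → ℂ} {D : Set E} {J : E → E}
    (hJ2 : ∀ x, J (J x) = x) (hJD : ∀ x ∈ D, J x ∈ D)
    (hoff : ∀ x y, x ∈ D → y ∈ D → v (J x) y = -v x (J y)) {x : E} (hx : x ∈ D) :
    v (J x) (J x) = -v x x := by
  rw [hoff x (J x) hx (hJD x hx), hJ2]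

theorem relativeBound_le_one_iff [Zero E] {a v : E → E → ℂ} {D : Set E}
    (hpos : ∀ x, x ∈ D → x ≠ 0 → 0 < (a x x).re) {v₀ : ℝ}
    (hv₀ : IsLUB {r : ℝ | ∃ x, x ∈ D ∧ x ≠ 0 ∧ r = ‖v x x‖ / (a x x).re} v₀) :
    v₀ ≤ 1 ↔ ∀ x ∈ D, x ≠ 0 → ‖v x x‖ ≤ (a x x).re := by
  rw [isLUB_le_iff hv₀, mem_upperBounds]
  constructor
  · intro h x hx hx0
    exact (div_le_one (hpos x hx hx0)).mp (h _ ⟨x, hx, hx0, rfl⟩)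
  · rintro h _ ⟨x, hx, hx0, rfl⟩
    exact (div_le_one (hpos x hx hx0)).mpr (h x hx hx0)

end Forms

theorem offdiag_form_nonneg_iff_relative_bound_le_one_general
    {H : Type*} [NormedAddCommGroup H] [InnerProductSpace ℂ H]
    (J : H →L[ℂ] H) (hJ2 : ∀ x : H, J (J x) = x)
    (D : Submodule ℂ H) (hJD : ∀ x ∈ D, J x ∈ D)
    (aJ v : H → H → ℂ)
    -- aJ is a sesquilinear, symmetric, positive definite form on D, invariant under J
    (hasmul₁ : ∀ (c : ℂ) (x y : H), x ∈ D → y ∈ D → aJ (c • x) y = conj c * aJ x y)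
    (hapos : ∀ x, x ∈ D → x ≠ 0 → 0 < (aJ x x).re)
    (haJ : ∀ x y, x ∈ D → y ∈ D → aJ (J x) (J y) = aJ x y)
    -- v is a sesquilinear, symmetric, off-diagonal form on D
    (hsmul₁ : ∀ (c : ℂ) (x y : H), x ∈ D → y ∈ D → v (c • x) y = conj c * v x y)
    (hsym : ∀ x y, x ∈ D → y ∈ D → v x y = conj (v y x))
    (hoff : ∀ x y, x ∈ D → y ∈ D → v (J x) y = -v x (J y))
    -- v₀ is the (finite) relative bound of v with respect to aJ
    (v₀ : ℝ)
    (hv₀ : IsLUB {r : ℝ | ∃ x, x ∈ D ∧ x ≠ 0 ∧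
      r = ‖v x x‖ / (aJ x x).re} v₀) :
    (∀ x, x ∈ D → 0 ≤ (aJ x x).re + (v x x).re) ↔ v₀ ≤ 1 := by
  rw [relativeBound_le_one_iff hapos hv₀]
  constructor
  · intro hnonneg x hx _
    have hflip := hnonneg (J x) (hJD x hx)
    rw [haJ x x hx hx, apply_self_involution_of_anticomm hJ2 hJD hoff hx, Complex.neg_re] at hflip
    exact Complex.norm_le_of_im_eq_zero (im_apply_self_eq_zero_of_conj_symm hsym hx)
      (hnonneg x hx) (by linarith)
  · intro hbound x hx
    rcases eq_or_ne x 0 with rfl | hx0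
    · simp [apply_zero_zero_of_conj_smul_left hasmul₁, apply_zero_zero_of_conj_smul_left hsmul₁]
    · exact Complex.add_re_nonneg_of_norm_le (hbound x hx hx0)

/-- Birman–Schwinger-type criterion: for a positive definite symmetric `J`-invariant form `aJ`
and a symmetric off-diagonal form `v` on `D` whose relative bound is
`v₀ = sup_{0≠x∈D} |v[x]|/aJ[x] < ∞`, the form `aJ + v` is nonnegative iff `v₀ ≤ 1`. -/
theorem offdiag_form_nonneg_iff_relative_bound_le_one
    {H : Type*} [NormedAddCommGroup H] [InnerProductSpace ℂ H] [CompleteSpace H]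
    (J : H →L[ℂ] H) (hJsa : IsSelfAdjoint J) (hJ2 : ∀ x : H, J (J x) = x)
    (D : Submodule ℂ H) (hJD : ∀ x ∈ D, J x ∈ D)
    (aJ v : H → H → ℂ)
    -- aJ is a sesquilinear, symmetric, positive definite form on D, invariant under J
    (haadd₁ : ∀ x y z, x ∈ D → y ∈ D → z ∈ D → aJ (x + y) z = aJ x z + aJ y z)
    (haadd₂ : ∀ x y z, x ∈ D → y ∈ D → z ∈ D → aJ x (y + z) = aJ x y + aJ x z)
    (hasmul₁ : ∀ (c : ℂ) (x y : H), x ∈ D → y ∈ D → aJ (c • x) y = conj c * aJ x y)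
    (hasmul₂ : ∀ (c : ℂ) (x y : H), x ∈ D → y ∈ D → aJ x (c • y) = c * aJ x y)
    (hasym : ∀ x y, x ∈ D → y ∈ D → aJ x y = conj (aJ y x))
    (hapos : ∀ x, x ∈ D → x ≠ 0 → 0 < (aJ x x).re)
    (haJ : ∀ x y, x ∈ D → y ∈ D → aJ (J x) (J y) = aJ x y)
    -- v is a sesquilinear, symmetric, off-diagonal form on D
    (hadd₁ : ∀ x y z, x ∈ D → y ∈ D → z ∈ D → v (x + y) z = v x z + v y z)
    (hadd₂ : ∀ x y z, x ∈ D → y ∈ D → z ∈ D → v x (y + z) = v x y + v x z)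
    (hsmul₁ : ∀ (c : ℂ) (x y : H), x ∈ D → y ∈ D → v (c • x) y = conj c * v x y)
    (hsmul₂ : ∀ (c : ℂ) (x y : H), x ∈ D → y ∈ D → v x (c • y) = c * v x y)
    (hsym : ∀ x y, x ∈ D → y ∈ D → v x y = conj (v y x))
    (hoff : ∀ x y, x ∈ D → y ∈ D → v (J x) y = -v x (J y))
    -- v₀ is the (finite) relative bound of v with respect to aJ
    (v₀ : ℝ)
    (hv₀ : IsLUB {r : ℝ | ∃ x, x ∈ D ∧ x ≠ 0 ∧
      r = ‖v x x‖ / (aJ x x).re} v₀) :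
    (∀ x, x ∈ D → 0 ≤ (aJ x x).re + (v x x).re) ↔ v₀ ≤ 1 :=
  offdiag_form_nonneg_iff_relative_bound_le_one_general J hJ2 D hJD aJ v hasmul₁ hapos haJ hsmul₁
    hsym hoff v₀ hv₀
end
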